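/- arXiv:1908.07392 — 2 statements merged into one kernel-verified Lean document; each statement's English description precedes it below -/
import Mathlib

section
/- Consider the first-order IMEX discretization of the Fourier mode of the 1D advection–diffusion equation u_t + u_x - (1/Re) u_xx = 0, namely (û^{n+1} - û^n)/δt + i k û^n + (k²/Re) û^{n+1} = 0 with δt > 0, Re > 0, and k ∈ ℝ. Then the scheme is stable, i.e. |û^{n+1}| ≤ |û^n| for every mode k ∈ ℝ and every initial value û^n ∈ ℂ, if and only if δt · Re ≤ 2. -/
open Complex

lemma imex_key (δt Re k : ℝ) (hδt : 0 < δt) (hRe : 0 < Re) (u u' : ℂ) :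
    ((u' - u) / (δt : ℂ) + Complex.I * (k : ℂ) * u + ((k : ℂ)^2 / (Re : ℂ)) * u' = 0) ↔
    u' * (1 + ((δt * k^2 / Re : ℝ) : ℂ)) = u * (1 - Complex.I * ((k * δt : ℝ) : ℂ)) := by
  have hδ : (δt:ℂ) ≠ 0 := by exact_mod_cast hδt.ne'
  have hR : (Re:ℂ) ≠ 0 := by exact_mod_cast hRe.ne'
  constructor <;> intro h
  · push_cast at h ⊢; field_simp at h ⊢; linear_combination h
  · push_cast at h ⊢; field_simp at h ⊢; linear_combination h

lemma imex_absA (x : ℝ) (hx : 0 ≤ x) : ‖(1 + ((x:ℝ):ℂ))‖ = 1 + x := by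
  rw [show ((1:ℂ) + (x:ℂ)) = (((1+x : ℝ)):ℂ) by push_cast; ring, Complex.norm_real]
  exact Real.norm_of_nonneg (by linarith)

lemma imex_absB (y : ℝ) : ‖(1 - Complex.I * ((y:ℝ):ℂ))‖ = Real.sqrt (1 + y^2) := by
  rw [Complex.norm_def, Complex.normSq_apply]
  simp [pow_two]


/-- Stability of the first-order IMEX discretization of a Fourier mode of the
1D advection–diffusion equation `u_t + u_x - (1/Re) u_xx = 0`:
`(û^{n+1} - û^n)/δt + i k û^n + (k²/Re) û^{n+1} = 0` is stable
(`|û^{n+1}| ≤ |û^n|` for all modes `k` and all initial data) iff `δt · Re ≤ 2`. -/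
theorem imex_advection_diffusion_stability (δt Re : ℝ) (hδt : 0 < δt) (hRe : 0 < Re) :
    (∀ (k : ℝ) (u u' : ℂ),
        (u' - u) / (δt : ℂ) + Complex.I * (k : ℂ) * u + ((k : ℂ)^2 / (Re : ℂ)) * u' = 0 →
        ‖u'‖ ≤ ‖u‖)
    ↔ δt * Re ≤ 2 := by
  constructor
  · intro hstab
    by_contra hgt
    push_neg at hgt
    set c : ℝ := δt * Re - 2 with hcdef
    have hc : 0 < c := by simp [hcdef]; linarith
    set s : ℝ := c * Re / (2 * δt) with hs
    have hspos : 0 < s := by positivity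
    set k : ℝ := Real.sqrt s with hk
    have hk2 : k ^ 2 = s := Real.sq_sqrt hspos.le
    set A : ℝ := 1 + δt * k ^ 2 / Re with hA
    have hApos : 0 < A := by positivity
    have hAC : ((A:ℝ):ℂ) ≠ 0 := by exact_mod_cast hApos.ne'
    set u' : ℂ := (1 - Complex.I * ((k * δt : ℝ) : ℂ)) / ((A:ℝ):ℂ) with hu'
    have heq : u' * (1 + ((δt * k^2 / Re : ℝ) : ℂ)) = 1 * (1 - Complex.I * ((k * δt : ℝ) : ℂ)) := by
      rw [hu']
      have h1 : (1:ℂ) + ((δt * k^2 / Re : ℝ) : ℂ) = ((A:ℝ):ℂ) := by push_cast [hA]; ring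
      rw [h1]
      field_simp
    have h := hstab k 1 u' ((imex_key δt Re k hδt hRe 1 u').mpr heq)
    rw [norm_one] at h
    have habs : ‖u'‖ = Real.sqrt (1 + (k*δt)^2) / A := by
      rw [hu', norm_div, imex_absB, Complex.norm_of_nonneg hApos.le]
    rw [habs, div_le_one hApos] at h
    have h2 : 1 + (k*δt)^2 ≤ A^2 := by
      have h3 := pow_le_pow_left₀ (Real.sqrt_nonneg _) h 2
      rwa [Real.sq_sqrt (by positivity : (0:ℝ) ≤ 1 + (k*δt)^2)] at h3
    -- express in terms of c
    have hkdt : (k*δt)^2 = c * Re * δt / 2 := by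
      rw [mul_pow, hk2, hs]; field_simp
    have hdsR : δt * s / Re = c / 2 := by
      rw [hs]; field_simp
    rw [hkdt, hA, hk2, hdsR] at h2
    have hRδ : δt * Re = c + 2 := by rw [hcdef]; ring
    nlinarith [h2, hc, hRδ, sq_nonneg c]
  · intro hle k u u' heq
    have h := (imex_key δt Re k hδt hRe u u').mp heq
    set A : ℝ := 1 + δt * k ^ 2 / Re with hA
    have hApos : 0 < A := by positivity
    have habs : ‖u'‖ * A = ‖u‖ * Real.sqrt (1 + (k*δt)^2) := by
      have := congrArg (‖·‖) h
      rwa [norm_mul, norm_mul, imex_absA _ (by positivity), imex_absB] at this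
    have hsq : 1 + (k*δt)^2 ≤ A^2 := by
      have ht : (0:ℝ) ≤ δt * k^2 / Re := by positivity
      have he : δt^2 * k^2 = (δt*Re) * (δt*k^2/Re) := by field_simp
      rw [hA]
      nlinarith [he, mul_le_mul_of_nonneg_right hle ht, sq_nonneg (δt*k^2/Re)]
    have hBle : Real.sqrt (1 + (k*δt)^2) ≤ A := by
      have := Real.sqrt_le_sqrt hsq
      rwa [Real.sqrt_sq hApos.le] at this
    have hu'eq : ‖u'‖ = ‖u‖ * Real.sqrt (1 + (k*δt)^2) / A := by
      rw [eq_div_iff hApos.ne']; exact habs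
    rw [hu'eq, div_le_iff₀ hApos]
    exact mul_le_mul_of_nonneg_left hBle (norm_nonneg u)
end

section
/- Let A : ℂ^n → ℂ^n be of the form A = (1/2) I + D + W, where W has rank at most 1 with range spanned by a vector n₀ such that ⟨n₀, W x⟩ = 0 implies W x = 0. Suppose: (i) the nullspace of (1/2) I + D is one-dimensional, spanned by ξ with ⟨n₀, ξ⟩ ≠ 0; (ii) for every x, ⟨n₀, ((1/2) I + D) x⟩ = 0; and (iii) W x = c ⟨n₀, x⟩ n₀ for some constant c ≠ 0 with ‖n₀‖ = 1. Then A is injective (hence invertible), and for any right-hand side f with ⟨n₀, f⟩ = 0, the solution x of A x = f satisfies W x = 0, i.e. ((1/2) I + D) x = f. -/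
open scoped InnerProductSpace

/-- Wielandt deflation / nullspace correction, finite-dimensional abstraction:
let `A = (1/2)I + D + W` on `ℂⁿ`, where `W x = c ⟨n₀, x⟩ n₀` is rank at most one with
`‖n₀‖ = 1` and `c ≠ 0`; suppose the nullspace of `(1/2)I + D` is one-dimensional, spanned
by `ξ ≠ 0` with `⟨n₀, ξ⟩ ≠ 0`, and `⟨n₀, ((1/2)I + D)x⟩ = 0` for all `x`. Then `A` is
injective (hence invertible), and for any `f` with `⟨n₀, f⟩ = 0`, the solution `x` of
`A x = f` satisfies `W x = 0`, i.e. `((1/2)I + D)x = f`. -/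
theorem wielandt_deflation
    {n : ℕ}
    (A D W : EuclideanSpace ℂ (Fin n) →ₗ[ℂ] EuclideanSpace ℂ (Fin n))
    (n₀ ξ : EuclideanSpace ℂ (Fin n)) (c : ℂ)
    (hA : ∀ x, A x = (1 / 2 : ℂ) • x + D x + W x)
    (hW : ∀ x, W x = (c * ⟪n₀, x⟫_ℂ) • n₀)
    (hc : c ≠ 0) (hn₀ : ‖n₀‖ = 1)
    (hξ : ξ ≠ 0) (hnξ : ⟪n₀, ξ⟫_ℂ ≠ 0)
    (hker : ∀ x, ((1 / 2 : ℂ) • x + D x = 0 ↔ ∃ t : ℂ, x = t • ξ))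
    (hii : ∀ x, ⟪n₀, (1 / 2 : ℂ) • x + D x⟫_ℂ = 0) :
    Function.Injective A ∧
      ∀ f x, ⟪n₀, f⟫_ℂ = 0 → A x = f →
        W x = 0 ∧ (1 / 2 : ℂ) • x + D x = f := by
  have hnn : ⟪n₀, n₀⟫_ℂ = 1 := by
    rw [inner_self_eq_norm_sq_to_K, hn₀]; norm_num
  -- key: if ⟪n₀, A x⟫ = 0 then ⟪n₀, x⟫ = 0 (hence W x = 0)
  have key : ∀ x, ⟪n₀, A x⟫_ℂ = 0 → ⟪n₀, x⟫_ℂ = 0 := by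
    intro x hx
    rw [hA, inner_add_right, hii, hW, inner_smul_right, hnn, mul_one, zero_add] at hx
    exact (mul_eq_zero.mp hx).resolve_left hc
  have hWz : ∀ x, ⟪n₀, x⟫_ℂ = 0 → W x = 0 := by
    intro x hx; rw [hW, hx, mul_zero, zero_smul]
  constructor
  · rw [← LinearMap.ker_eq_bot, LinearMap.ker_eq_bot']
    intro x hx
    have h1 : ⟪n₀, x⟫_ℂ = 0 := key x (by rw [hx, inner_zero_right])
    have h2 : (1 / 2 : ℂ) • x + D x = 0 := by
      have := hA x; rw [hx, hWz x h1, add_zero] at this; exact this.symm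
    obtain ⟨t, ht⟩ := (hker x).mp h2
    rw [ht, inner_smul_right] at h1
    have : t = 0 := (mul_eq_zero.mp h1).resolve_right hnξ
    rw [ht, this, zero_smul]
  · intro f x hf hAx
    have h1 : ⟪n₀, x⟫_ℂ = 0 := key x (by rw [hAx, hf])
    have hw := hWz x h1
    refine ⟨hw, ?_⟩
    have := hA x; rw [hAx, hw, add_zero] at this; exact this.symm
end
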